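/- For every integer i ≥ 3, every axis-aligned square S, and every triangle T of Slicing(i) of S, at least one tile of Tiling(4φ(i)) of S is contained in the interior of T. -/

import Mathlib

open Real

noncomputable section

/-- Points of the Euclidean plane. -/
abbrev Pt := EuclideanSpace ℝ (Fin 2)

/-- The unit vector in direction angle `a`. -/
def unitDir (a : ℝ) : Pt := !₂[Real.cos a, Real.sin a]

/-- The closed angular sector with apex `p`, swept clockwise from the half-line in
direction angle `a` through angle `θ` (it consists of the points lying on the half-lines
from `p` in the direction angles `a - t` for `0 ≤ t ≤ θ`, including both bounding
half-lines). -/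
def sector (p : Pt) (a θ : ℝ) : Set Pt :=
  {q | ∃ r : ℝ, 0 ≤ r ∧ ∃ t : ℝ, 0 ≤ t ∧ t ≤ θ ∧ q = p + r • unitDir (a - t)}

/-- The axis-aligned square with center `q` and side length `x`. -/
def square (q : Pt) (x : ℝ) : Set Pt :=
  {y | y 0 ∈ Set.Icc (q 0 - x / 2) (q 0 + x / 2) ∧ y 1 ∈ Set.Icc (q 1 - x / 2) (q 1 + x / 2)}

/-- The tile in position `(a, b)` of `Tiling(m)` of the square with center `q` and side
length `x`: the `(a, b)`-th of the `4^m` closed congruent subsquares of side `x / 2^m`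
arranged in a `2^m × 2^m` grid. -/
def tile (q : Pt) (x : ℝ) (m : ℕ) (a b : ℕ) : Set Pt :=
  {y | y 0 ∈ Set.Icc (q 0 - x / 2 + a * (x / 2 ^ m)) (q 0 - x / 2 + (a + 1) * (x / 2 ^ m)) ∧
       y 1 ∈ Set.Icc (q 1 - x / 2 + b * (x / 2 ^ m)) (q 1 - x / 2 + (b + 1) * (x / 2 ^ m))}

/-- `t` is a tile of `Tiling(m)` of the square with center `q` and side length `x`. -/
def IsTile (q : Pt) (x : ℝ) (m : ℕ) (t : Set Pt) : Prop :=
  ∃ a b : ℕ, a < 2 ^ m ∧ b < 2 ^ m ∧ t = tile q x m a b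

/-- The `k`-th piece of `Slicing(i)` of the square with center `q` and side length `x`:
the part of the square lying in the angular sector bounded by the half-lines from `q` at
direction angles `2πk/2^i` and `2π(k+1)/2^i` (for `i ≥ 3` this piece is a triangle). -/
def slicePiece (q : Pt) (x : ℝ) (i k : ℕ) : Set Pt :=
  {y | ∃ r : ℝ, 0 ≤ r ∧ ∃ θ : ℝ, 2 * π * k / 2 ^ i ≤ θ ∧ θ ≤ 2 * π * (k + 1) / 2 ^ i ∧
    y = q + r • unitDir θ} ∩ square q x

/-- `T` is a triangle of `Slicing(i)` of the square with center `q` and side length `x`. -/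
def IsSliceTriangle (q : Pt) (x : ℝ) (i : ℕ) (T : Set Pt) : Prop :=
  ∃ k : ℕ, k < 2 ^ i ∧ T = slicePiece q x i k

/-- The vertex of `Slicing(i)` on the boundary of the square of side 2 centered at the
origin: the intersection of the `k`-th slicing half-line with the boundary of the square. -/
def sliceVertex (i k : ℕ) : Pt :=
  (max |Real.cos (2 * π * k / 2 ^ i)| |Real.sin (2 * π * k / 2 ^ i)|)⁻¹ •
    unitDir (2 * π * k / 2 ^ i)

/-- The set of side lengths of the triangles of `Slicing(i)` of the square of side 2
centered at the origin (the triangle `k` has vertices `0`, `sliceVertex i k` and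
`sliceVertex i (k+1)`); the ratios of side lengths are independent of the size of the
square. -/
def sideLengths (i : ℕ) : Set ℝ :=
  ⋃ k ∈ Set.Iio (2 ^ i), {‖sliceVertex i k‖, dist (sliceVertex i k) (sliceVertex i (k + 1))}

/-- `ρ i`: the maximum of `⌈a/b⌉` over all side lengths `a`, `b` of triangles of
`Slicing(i)` of a square. -/
def rho (i : ℕ) : ℕ :=
  sSup {n : ℕ | ∃ a ∈ sideLengths i, ∃ b ∈ sideLengths i, n = ⌈a / b⌉₊}

/-- `φ(i) = i · ρ i`. -/
def phi (i : ℕ) : ℕ := i * rho i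

/-- `index(α) = 4 · φ(max(3, ⌈log₂(2π/α)⌉ + 1))`. -/
def index (α : ℝ) : ℕ := 4 * phi (max 3 (⌈Real.logb 2 (2 * π / α)⌉ + 1)).toNat

/-!
Let `p` be the point at distance `x / 4` from the centre `q` on the bisector of the slice.
An open disc of radius `d` around `p` lies in the slice as soon as it stays in the square and
`d ≤ (x / 4 - d) · π / 2 ^ i`, for then every point of it is seen from `q` within the half
angle `π / 2 ^ i` of the bisector. Since `ρ_i ≥ 1`, the tiles of `Tiling(4φ(i))` have side
`ε ≤ x / 2 ^ (i + 4)`, and the tile containing `p` lies in the disc of radius `2ε`, which is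
small enough; the disc being open, the tile lies in the interior of the slice.
-/

lemma abs_arctan_le_abs (t : ℝ) : |arctan t| ≤ |t| := by
  have arctan_le_of_nonneg : ∀ s : ℝ, 0 ≤ s → arctan s ≤ s := fun s hs =>
    (le_tan (arctan_nonneg.mpr hs) (arctan_lt_pi_div_two s)).trans_eq (tan_arctan s)
  rcases le_total 0 t with ht | ht
  · rw [abs_of_nonneg (arctan_nonneg.mpr ht), abs_of_nonneg ht]
    exact arctan_le_of_nonneg t ht
  · rw [abs_of_nonpos (arctan_le_zero.mpr ht), abs_of_nonpos ht, ← arctan_neg]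
    exact arctan_le_of_nonneg (-t) (neg_nonneg.mpr ht)

@[simp]
lemma unitDir_apply_zero (a : ℝ) : unitDir a 0 = cos a := rfl

@[simp]
lemma unitDir_apply_one (a : ℝ) : unitDir a 1 = sin a := rfl

lemma inner_unitDir (v : Pt) (a : ℝ) : inner ℝ v (unitDir a) = v 0 * cos a + v 1 * sin a := by
  simp [PiLp.inner_apply, Fin.sum_univ_two, mul_comm]

lemma norm_unitDir (a : ℝ) : ‖unitDir a‖ = 1 := by
  simp [EuclideanSpace.norm_eq, Fin.sum_univ_two]

lemma inner_unitDir_add_pi_div_two (v : Pt) (a : ℝ) :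
    inner ℝ v (unitDir (a + π / 2)) = v 1 * cos a - v 0 * sin a := by
  rw [inner_unitDir, cos_add_pi_div_two, sin_add_pi_div_two]; ring

lemma exists_eq_smul_unitDir_of_abs_inner_le {v : Pt} {a β : ℝ}
    (hpos : 0 < inner ℝ v (unitDir a))
    (hle : |inner ℝ v (unitDir (a + π / 2))| ≤ β * inner ℝ v (unitDir a)) :
    ∃ r : ℝ, 0 ≤ r ∧ ∃ δ, |δ| ≤ β ∧ v = r • unitDir (a + δ) := by
  rw [inner_unitDir_add_pi_div_two] at hle
  rw [inner_unitDir] at hpos hle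
  set A := v 0 * cos a + v 1 * sin a
  set B := v 1 * cos a - v 0 * sin a
  set δ := arctan (B / A)
  have hcos : 0 < cos δ := cos_arctan_pos _
  have hδ : |δ| ≤ β := by
    refine (abs_arctan_le_abs _).trans ?_
    rwa [abs_div, abs_of_pos hpos, div_le_iff₀ hpos]
  have hrcos : A / cos δ * cos δ = A := div_mul_cancel₀ A hcos.ne'
  have hrsin : A / cos δ * sin δ = B := by
    rw [div_mul_eq_mul_div, mul_div_assoc, ← tan_eq_sin_div_cos, tan_arctan,
      mul_div_cancel₀ B hpos.ne']
  refine ⟨A / cos δ, (div_pos hpos hcos).le, δ, hδ, ?_⟩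
  ext j
  fin_cases j
  · simp only [Fin.zero_eta, PiLp.smul_apply, unitDir_apply_zero, cos_add]
    linear_combination -v 0 * sin_sq_add_cos_sq a - cos a * hrcos + sin a * hrsin
  · simp only [Fin.mk_one, PiLp.smul_apply, unitDir_apply_one, sin_add]
    linear_combination -v 1 * sin_sq_add_cos_sq a - sin a * hrcos - cos a * hrsin

lemma inner_unitDir_unitDir_add_pi_div_two (a : ℝ) :
    inner ℝ (unitDir a) (unitDir (a + π / 2)) = 0 := by
  rw [inner_unitDir_add_pi_div_two, unitDir_apply_zero, unitDir_apply_one]; ring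

/-- `hangle` keeps the angular deviation `arctan (d / (ρ - d))` of the disc, seen from `q`,
within half the slice angle. -/
lemma ball_subset_slicePiece {q : Pt} {x ρ d : ℝ} {i k : ℕ}
    (hdρ : d < ρ) (hangle : d ≤ (ρ - d) * (π / 2 ^ i)) (hρd : ρ + d ≤ x / 2) :
    Metric.ball (q + ρ • unitDir ((2 * k + 1) * π / 2 ^ i)) d ⊆ slicePiece q x i k := by
  intro y hy
  set a := (2 * k + 1) * π / 2 ^ i
  set w := y - q - ρ • unitDir a
  have hw : ‖w‖ < d := by rwa [Metric.mem_ball, dist_eq_norm, ← sub_sub] at hy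
  have hρ : 0 < ρ := (norm_nonneg w).trans_lt hw |>.trans hdρ
  have hyq : y - q = ρ • unitDir a + w := by simp only [w]; abel
  have hnorm : ‖y - q‖ ≤ x / 2 := by
    calc ‖y - q‖ ≤ ‖ρ • unitDir a‖ + ‖w‖ := hyq ▸ norm_add_le _ _
      _ ≤ ρ + d := by rw [norm_smul, norm_unitDir, Real.norm_of_nonneg hρ.le]; linarith
      _ ≤ x / 2 := hρd
  have hA : ρ - d < inner ℝ (y - q) (unitDir a) := by
    have hwA := abs_le.mp ((abs_real_inner_le_norm w (unitDir a)).trans_eq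
      (by rw [norm_unitDir, mul_one]))
    rw [hyq, inner_add_left, real_inner_smul_left, real_inner_self_eq_norm_sq, norm_unitDir]
    linarith [hwA.1]
  have hB : |inner ℝ (y - q) (unitDir (a + π / 2))| < d := by
    rw [hyq, inner_add_left, real_inner_smul_left, inner_unitDir_unitDir_add_pi_div_two,
      mul_zero, zero_add]
    exact ((abs_real_inner_le_norm _ _).trans_eq (by rw [norm_unitDir, mul_one])).trans_lt hw
  have hβ : 0 ≤ π / 2 ^ i := by positivity
  obtain ⟨r, hr, δ, hδ, hv⟩ := exists_eq_smul_unitDir_of_abs_inner_le (β := π / 2 ^ i)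
    (by linarith) (hB.le.trans <| hangle.trans <| by
      rw [mul_comm]; exact mul_le_mul_of_nonneg_left hA.le hβ)
  have ha : a = 2 * π * k / 2 ^ i + π / 2 ^ i := by ring
  have hδ' := abs_le.mp hδ
  refine ⟨⟨r, hr, a + δ, by linarith, ?_, eq_add_of_sub_eq' hv⟩, ?_⟩
  · rw [show 2 * π * (k + 1) / 2 ^ i = 2 * π * k / 2 ^ i + 2 * (π / 2 ^ i) by ring]
    linarith
  · have hcoord := fun j => abs_le.mp ((PiLp.norm_apply_le (y - q) j).trans hnorm)
    simp only [PiLp.sub_apply] at hcoord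
    exact ⟨⟨by linarith [hcoord 0], by linarith [hcoord 0]⟩,
      ⟨by linarith [hcoord 1], by linarith [hcoord 1]⟩⟩

lemma exists_lt_two_pow_abs_sub_le {x c : ℝ} (hx : 0 < x) (hc : 0 ≤ c) (hcx : c < x) (m : ℕ) :
    ∃ a : ℕ, a < 2 ^ m ∧
      ∀ t ∈ Set.Icc (a * (x / 2 ^ m)) ((a + 1) * (x / 2 ^ m)), |t - c| ≤ x / 2 ^ m := by
  set ε := x / 2 ^ m
  have hε : 0 < ε := by positivity
  have hcε : 0 ≤ c / ε := div_nonneg hc hε.le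
  refine ⟨⌊c / ε⌋₊, ?_, fun t ht => abs_le.mpr ⟨?_, ?_⟩⟩
  · rw [Nat.floor_lt hcε, div_lt_iff₀ hε]
    rwa [Nat.cast_pow, Nat.cast_two, mul_div_cancel₀ x (pow_ne_zero m two_ne_zero)]
  · have := Nat.lt_floor_add_one (c / ε)
    rw [div_lt_iff₀ hε] at this
    linarith [ht.1]
  · have := Nat.floor_le hcε
    rw [le_div_iff₀ hε] at this
    linarith [ht.2]

lemma dist_lt_two_mul_of_abs_sub_le {y p : Pt} {ε : ℝ} (hε : 0 < ε)
    (h : ∀ j, |y j - p j| ≤ ε) : dist y p < 2 * ε := by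
  have hsq : ∀ j, dist (y j) (p j) ^ 2 ≤ ε ^ 2 := fun j => by
    rw [Real.dist_eq]; exact pow_le_pow_left₀ (abs_nonneg _) (h j) 2
  rw [EuclideanSpace.dist_eq, Fin.sum_univ_two, Real.sqrt_lt' (by positivity)]
  nlinarith [hsq 0, hsq 1]

lemma exists_tile_subset_ball {q p : Pt} {x : ℝ} (hx : 0 < x) (m : ℕ) (hp : ‖p - q‖ < x / 2) :
    ∃ t, IsTile q x m t ∧ t ⊆ Metric.ball p (2 * (x / 2 ^ m)) := by
  have hcoord := fun j => abs_lt.mp ((PiLp.norm_apply_le (p - q) j).trans_lt hp)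
  simp only [PiLp.sub_apply] at hcoord
  obtain ⟨a, ha, hta⟩ := exists_lt_two_pow_abs_sub_le (c := p 0 - (q 0 - x / 2)) hx
    (by linarith [hcoord 0]) (by linarith [hcoord 0]) m
  obtain ⟨b, hb, htb⟩ := exists_lt_two_pow_abs_sub_le (c := p 1 - (q 1 - x / 2)) hx
    (by linarith [hcoord 1]) (by linarith [hcoord 1]) m
  refine ⟨tile q x m a b, ⟨a, b, ha, hb, rfl⟩, fun y ⟨hy0, hy1⟩ => ?_⟩
  refine Metric.mem_ball.mpr
    (dist_lt_two_mul_of_abs_sub_le (by positivity) (Fin.forall_fin_two.mpr ⟨?_, ?_⟩))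
  · simpa only [sub_sub_sub_cancel_right] using
      hta (y 0 - (q 0 - x / 2)) ⟨by linarith [hy0.1], by linarith [hy0.2]⟩
  · simpa only [sub_sub_sub_cancel_right] using
      htb (y 1 - (q 1 - x / 2)) ⟨by linarith [hy1.1], by linarith [hy1.2]⟩

lemma sideLengths_finite (i : ℕ) : (sideLengths i).Finite :=
  (Set.finite_Iio _).biUnion fun _ _ => (Set.finite_singleton _).insert _

lemma norm_sliceVertex_zero (i : ℕ) : ‖sliceVertex i 0‖ = 1 := by
  simp [sliceVertex, norm_unitDir]

lemma one_le_rho (i : ℕ) : 1 ≤ rho i := by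
  have hbdd : BddAbove {n : ℕ | ∃ a ∈ sideLengths i, ∃ b ∈ sideLengths i, n = ⌈a / b⌉₊} :=
    (((sideLengths_finite i).prod (sideLengths_finite i)).image
      fun ab => ⌈ab.1 / ab.2⌉₊).bddAbove.mono
      (by rintro n ⟨a, ha, b, hb, rfl⟩; exact ⟨(a, b), ⟨ha, hb⟩, rfl⟩)
  have hv : ‖sliceVertex i 0‖ ∈ sideLengths i :=
    Set.mem_biUnion (Nat.pow_pos two_pos) (Set.mem_insert _ _)
  refine le_csSup hbdd ⟨_, hv, _, hv, ?_⟩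
  rw [norm_sliceVertex_zero, div_one, Nat.ceil_one]

lemma le_phi (i : ℕ) : i ≤ phi i := Nat.le_mul_of_pos_right i (one_le_rho i)

/-- For every integer `i ≥ 3`, every axis-aligned square `S` and every triangle `T` of
`Slicing(i)` of `S`, at least one tile of `Tiling(4φ(i))` of `S` is contained in the
interior of `T`. -/
theorem slice_triangle_contains_interior_tile (i : ℕ) (hi : 3 ≤ i)
    (q : Pt) (x : ℝ) (hx : 0 < x)
    (T : Set Pt) (hT : IsSliceTriangle q x i T) :
    ∃ t : Set Pt, IsTile q x (4 * phi i) t ∧ t ⊆ interior T := by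
  obtain ⟨k, -, rfl⟩ := hT
  set p := q + (x / 4) • unitDir ((2 * k + 1) * π / 2 ^ i)
  have hp : ‖p - q‖ = x / 4 := by
    rw [add_sub_cancel_left, norm_smul, norm_unitDir, mul_one, Real.norm_of_nonneg (by positivity)]
  obtain ⟨t, ht, htp⟩ := exists_tile_subset_ball hx (4 * phi i) (p := p) (by rw [hp]; linarith)
  set ε := x / 2 ^ (4 * phi i)
  have hε : 0 < ε := by positivity
  have hεx : 2 ^ i * (16 * ε) ≤ x :=
    calc 2 ^ i * (16 * ε) = ε * 2 ^ (i + 4) := by ring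
      _ ≤ ε * 2 ^ (4 * phi i) := by
        gcongr
        · exact one_le_two
        · linarith [le_phi i]
      _ = x := div_mul_cancel₀ x (by positivity)
  have h2i : (8 : ℝ) ≤ 2 ^ i :=
    calc (8 : ℝ) = 2 ^ 3 := by norm_num
      _ ≤ 2 ^ i := pow_le_pow_right₀ one_le_two hi
  have hε128 : 128 * ε ≤ x := by nlinarith
  clear_value ε
  refine ⟨t, ht, htp.trans (interior_maximal (ball_subset_slicePiece ?_ ?_ ?_) Metric.isOpen_ball)⟩
  · linarith
  · rw [← mul_div_assoc, le_div_iff₀ (by positivity)]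
    nlinarith [mul_le_mul_of_nonneg_left pi_gt_three.le (by linarith : 0 ≤ x / 4 - 2 * ε)]
  · linarith
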